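/- arXiv:1312.4034 — 4 statements merged into one kernel-verified Lean document; each statement's English description precedes it below -/
import Mathlib

section
/- Let ψ: ℝ^d → ℝ^d be a C¹ vector field with ψ(0) = 0, symmetric positive semidefinite Jacobian everywhere, and such that |ψ(r) − r/|r|| ≤ d(|r|) for a continuous function d with d(s) → 0 as s → ∞. Then |ψ(r)·r| ≤ |r| for every r ∈ ℝ^d. -/
open RealInnerProductSpace

theorem stmt_1 (d : ℕ) (ψ : EuclideanSpace ℝ (Fin d) → EuclideanSpace ℝ (Fin d))
    (hψ : ContDiff ℝ 1 ψ) (hψ0 : ψ 0 = 0)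
    (hsym : ∀ r v w, ⟪fderiv ℝ ψ r v, w⟫ = ⟪v, fderiv ℝ ψ r w⟫)
    (hpsd : ∀ r v, 0 ≤ ⟪fderiv ℝ ψ r v, v⟫)
    (D : ℝ → ℝ) (hDcont : Continuous D) (hDnonneg : ∀ s, 0 ≤ D s)
    (hDlim : Filter.Tendsto D Filter.atTop (nhds 0))
    (hbound : ∀ r : EuclideanSpace ℝ (Fin d), r ≠ 0 → ‖ψ r - ‖r‖⁻¹ • r‖ ≤ D ‖r‖) :
    ∀ r : EuclideanSpace ℝ (Fin d), |⟪ψ r, r⟫| ≤ ‖r‖ := by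
  intro r
  rcases eq_or_ne r 0 with rfl | hr
  · simp [hψ0]
  have hrpos : (0:ℝ) < ‖r‖ := norm_pos_iff.mpr hr
  have hdiff : Differentiable ℝ ψ := hψ.differentiable one_ne_zero
  set F : ℝ → ℝ := fun t => ⟪ψ (t • r), r⟫ with hF
  have hderiv : ∀ t : ℝ, HasDerivAt F ⟪fderiv ℝ ψ (t • r) r, r⟫ t := by
    intro t
    have h1 : HasDerivAt (fun t : ℝ => t • r) r t := by
      simpa using (hasDerivAt_id t).smul_const r
    have h2 : HasDerivAt (fun t : ℝ => ψ (t • r)) (fderiv ℝ ψ (t • r) r) t :=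
      (hdiff (t • r)).hasFDerivAt.comp_hasDerivAt t h1
    have h3 := h2.inner ℝ (hasDerivAt_const t r)
    simpa [F] using h3
  have hmono : Monotone F := by
    apply monotone_of_deriv_nonneg
    · exact fun t => ((hderiv t).differentiableAt)
    · intro t
      rw [(hderiv t).deriv]
      have := hpsd (t • r) r
      linarith [real_inner_comm (fderiv ℝ ψ (t • r) r) r]
  have hF0 : F 0 = 0 := by simp [F, hψ0]
  have hF1 : F 1 = ⟪ψ r, r⟫ := by simp [F]
  -- F t ≤ ‖r‖ + D (t * ‖r‖) * ‖r‖ for t ≥ 1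
  have hub : ∀ t : ℝ, 1 ≤ t → F t ≤ ‖r‖ + D (t * ‖r‖) * ‖r‖ := by
    intro t ht
    have htpos : (0:ℝ) < t := lt_of_lt_of_le one_pos ht
    have htr : t • r ≠ 0 := by
      simp [smul_eq_zero, hr, ne_of_gt htpos]
    have hnorm : ‖t • r‖ = t * ‖r‖ := by
      rw [norm_smul, Real.norm_eq_abs, abs_of_pos htpos]
    have hsplit : F t = ⟪ψ (t • r) - ‖t • r‖⁻¹ • (t • r), r⟫ + ⟪‖t • r‖⁻¹ • (t • r), r⟫ := by
      rw [← inner_add_left]; simp [F]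
    have hsecond : ⟪‖t • r‖⁻¹ • (t • r), r⟫ = ‖r‖ := by
      rw [smul_smul, real_inner_smul_left, real_inner_self_eq_norm_sq, hnorm]
      field_simp
    have hfirst : ⟪ψ (t • r) - ‖t • r‖⁻¹ • (t • r), r⟫ ≤ D (t * ‖r‖) * ‖r‖ := by
      calc ⟪ψ (t • r) - ‖t • r‖⁻¹ • (t • r), r⟫
          ≤ ‖ψ (t • r) - ‖t • r‖⁻¹ • (t • r)‖ * ‖r‖ := real_inner_le_norm _ _
        _ ≤ D (t * ‖r‖) * ‖r‖ := by
            apply mul_le_mul_of_nonneg_right _ (norm_nonneg r)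
            rw [← hnorm]
            exact hbound (t • r) htr
    linarith [hsplit ▸ (by linarith [hfirst] : ⟪ψ (t • r) - ‖t • r‖⁻¹ • (t • r), r⟫ + ⟪‖t • r‖⁻¹ • (t • r), r⟫ ≤ D (t * ‖r‖) * ‖r‖ + ‖r‖) ]
  have htend : Filter.Tendsto (fun t : ℝ => ‖r‖ + D (t * ‖r‖) * ‖r‖) Filter.atTop (nhds ‖r‖) := by
    have h1 : Filter.Tendsto (fun t : ℝ => t * ‖r‖) Filter.atTop Filter.atTop :=
      Filter.tendsto_id.atTop_mul_const hrpos
    have h2 : Filter.Tendsto (fun t : ℝ => D (t * ‖r‖) * ‖r‖) Filter.atTop (nhds 0) := by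
      simpa using (hDlim.comp h1).mul_const ‖r‖
    simpa using (tendsto_const_nhds (x := ‖r‖)).add h2
  have hle : ⟪ψ r, r⟫ ≤ ‖r‖ := by
    rw [← hF1]
    refine ge_of_tendsto htend ?_
    filter_upwards [Filter.eventually_ge_atTop (1 : ℝ)] with t ht
    exact le_trans (hmono ht) (hub t ht)
  have hge : 0 ≤ ⟪ψ r, r⟫ := by
    rw [← hF1, ← hF0]; exact hmono zero_le_one
  rw [abs_le]
  constructor
  · linarith [norm_nonneg r]
  · exact hle
end

section
/- Let ψ: ℝ^d → ℝ^d satisfy |ψ(r) − r/|r|| ≤ d(|r|) for all r ≠ 0, where d : [0,∞) → [0,∞) is continuous with d(s) → 0 as s → ∞, and let Φ(r) = ∫₀¹ ψ(t r)·r dt be the potential of ψ along the straight path from 0. Then Φ(r) = |r| + o(|r|) as |r| → ∞; more precisely |Φ(r) − |r|| ≤ ∫₀^{|r|} d(λ) dλ. -/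
open RealInnerProductSpace MeasureTheory

theorem stmt_6 (d : ℕ) (ψ : EuclideanSpace ℝ (Fin d) → EuclideanSpace ℝ (Fin d))
    (hψcont : Continuous ψ)
    (D : ℝ → ℝ) (hDcont : Continuous D) (hDnonneg : ∀ s, 0 ≤ D s)
    (hDlim : Filter.Tendsto D Filter.atTop (nhds 0))
    (hbound : ∀ r : EuclideanSpace ℝ (Fin d), r ≠ 0 → ‖ψ r - ‖r‖⁻¹ • r‖ ≤ D ‖r‖) :
    ∀ r : EuclideanSpace ℝ (Fin d),
      |(∫ t in (0:ℝ)..1, ⟪ψ (t • r), r⟫) - ‖r‖| ≤ ∫ l in (0:ℝ)..‖r‖, D l := by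
  intro r
  rcases eq_or_ne r 0 with rfl | hr
  · simp
  · have hR : (0:ℝ) < ‖r‖ := norm_pos_iff.2 hr
    set R := ‖r‖ with hRdef
    have hfc : Continuous fun t : ℝ => ⟪ψ (t • r), r⟫ :=
      (hψcont.comp (continuous_id.smul continuous_const)).inner continuous_const
    have hDc : Continuous fun t : ℝ => D (t * R) * R :=
      (hDcont.comp (continuous_id.mul continuous_const)).mul continuous_const
    have key : ∀ t ∈ Set.uIoc (0:ℝ) 1, ‖⟪ψ (t • r), r⟫ - R‖ ≤ D (t * R) * R := by
      intro t ht
      rw [Set.uIoc_of_le (by norm_num : (0:ℝ) ≤ 1)] at ht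
      have ht0 : 0 < t := ht.1
      have hs : (t • r) ≠ 0 := smul_ne_zero ht0.ne' hr
      have hnorm : ‖t • r‖ = t * R := by
        rw [norm_smul, Real.norm_eq_abs, abs_of_pos ht0]
      have h1 : ⟪ψ (t • r), r⟫ - R = ⟪ψ (t • r) - ‖t • r‖⁻¹ • (t • r), r⟫ := by
        rw [inner_sub_left, real_inner_smul_left, real_inner_smul_left,
          real_inner_self_eq_norm_sq, hnorm]
        field_simp
        ring
      rw [h1, Real.norm_eq_abs]
      calc |⟪ψ (t • r) - ‖t • r‖⁻¹ • (t • r), r⟫|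
          ≤ ‖ψ (t • r) - ‖t • r‖⁻¹ • (t • r)‖ * ‖r‖ := abs_real_inner_le_norm _ _
        _ ≤ D (t * R) * R := by
            apply mul_le_mul_of_nonneg_right _ (norm_nonneg r)
            rw [← hnorm]; exact hbound _ hs
    have hsub : (∫ t in (0:ℝ)..1, ⟪ψ (t • r), r⟫) - R
        = ∫ t in (0:ℝ)..1, (⟪ψ (t • r), r⟫ - R) := by
      rw [intervalIntegral.integral_sub (hfc.intervalIntegrable 0 1)
        (intervalIntegrable_const), intervalIntegral.integral_const]
      simp
    have habs : |∫ t in (0:ℝ)..1, (⟪ψ (t • r), r⟫ - R)|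
        ≤ ∫ t in (0:ℝ)..1, D (t * R) * R := by
      rw [← Real.norm_eq_abs]
      have h := intervalIntegral.norm_integral_le_abs_of_norm_le
        ((MeasureTheory.ae_restrict_mem (μ := MeasureTheory.volume) measurableSet_uIoc).mono key)
        (hDc.intervalIntegrable 0 1)
      rwa [abs_of_nonneg (intervalIntegral.integral_nonneg (by norm_num)
        (fun t _ => mul_nonneg (hDnonneg _) hR.le))] at h
    have hcomp : (∫ t in (0:ℝ)..1, D (t * R) * R) = ∫ l in (0:ℝ)..R, D l := by
      rw [intervalIntegral.integral_mul_const,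
        intervalIntegral.integral_comp_mul_right D hR.ne']
      simp [smul_eq_mul]
      field_simp
    rw [hsub]
    calc |∫ t in (0:ℝ)..1, (⟪ψ (t • r), r⟫ - R)| ≤ ∫ t in (0:ℝ)..1, D (t * R) * R := habs
      _ = ∫ l in (0:ℝ)..R, D l := hcomp
end

section
/- Under Assumptions 1 on ψ and Assumptions 3 on φ, the Lagrangian f(z,ξ) = |z|φ(z)Φ(ξ/|z|) (f(0,ξ)=0) satisfies the linear-growth lower bound f(z,ξ) ≥ C₀ φ(z)|ξ| − D₀ |z| φ(z) for all (z,ξ), for suitable constants C₀, D₀ > 0. -/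
open RealInnerProductSpace

theorem stmt_9 (d : ℕ) (ψ : EuclideanSpace ℝ (Fin d) → EuclideanSpace ℝ (Fin d))
    (hψ : ContDiff ℝ 1 ψ) (hψ0 : ψ 0 = 0)
    (hsym : ∀ r v w, ⟪fderiv ℝ ψ r v, w⟫ = ⟪v, fderiv ℝ ψ r w⟫)
    (hpsd : ∀ r v, 0 ≤ ⟪fderiv ℝ ψ r v, v⟫)
    (D : ℝ → ℝ) (hDcont : Continuous D) (hDnonneg : ∀ s, 0 ≤ D s)
    (hDlim : Filter.Tendsto D Filter.atTop (nhds 0))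
    (hbound : ∀ r : EuclideanSpace ℝ (Fin d), r ≠ 0 → ‖ψ r - ‖r‖⁻¹ • r‖ ≤ D ‖r‖)
    (φ : ℝ → ℝ) (hφlip : ∃ K, LipschitzWith K φ)
    (hφnonneg : ∀ z, 0 ≤ φ z) (hφ0 : φ 0 = 0) (hφpos : ∀ z : ℝ, z ≠ 0 → 0 < φ z)
    (Φ : EuclideanSpace ℝ (Fin d) → ℝ)
    (hΦ : ∀ r, Φ r = ∫ t in (0:ℝ)..1, ⟪ψ (t • r), r⟫)
    (f : ℝ → EuclideanSpace ℝ (Fin d) → ℝ)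
    (hf : ∀ z ξ, f z ξ = if z = 0 then 0 else |z| * φ z * Φ (|z|⁻¹ • ξ)) :
    ∃ C₀ D₀ : ℝ, 0 < C₀ ∧ 0 < D₀ ∧
      ∀ (z : ℝ) (ξ : EuclideanSpace ℝ (Fin d)),
        C₀ * φ z * ‖ξ‖ - D₀ * |z| * φ z ≤ f z ξ := by
  -- Step 1: threshold R where D ≤ 1/4
  obtain ⟨R₀, hR₀⟩ : ∃ R₀ : ℝ, ∀ s ≥ R₀, D s ≤ 1/4 := by
    have h := hDlim.eventually_le_const (by norm_num : (0:ℝ) < 1/4)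
    exact Filter.eventually_atTop.mp h
  set R : ℝ := max R₀ 1 with hRdef
  have hRpos : 0 < R := lt_of_lt_of_le one_pos (le_max_right _ _)
  have hR : ∀ s ≥ R, D s ≤ 1/4 := fun s hs => hR₀ s (le_trans (le_max_left _ _) hs)
  -- Step 2: bound M on [0,R]
  obtain ⟨x, -, hx⟩ := isCompact_Icc.exists_isMaxOn (Set.nonempty_Icc.mpr hRpos.le)
    hDcont.continuousOn
  set M : ℝ := max (D x) 1 with hMdef
  have hMpos : 0 < M := lt_of_lt_of_le one_pos (le_max_right _ _)
  have hM : ∀ s ∈ Set.Icc (0:ℝ) R, D s ≤ M := fun s hs =>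
    le_trans (hx hs) (le_max_left _ _)
  set D₀ : ℝ := M * R + 1 with hD₀def
  have hD₀pos : 0 < D₀ := by positivity
  -- Step 3: key lower bound on Φ
  have hΦlb : ∀ r : EuclideanSpace ℝ (Fin d), (1/2) * ‖r‖ - D₀ ≤ Φ r := by
    intro r
    rcases eq_or_ne r 0 with rfl | hr
    · simp [hΦ]
      nlinarith
    · set a : ℝ := ‖r‖ with hadef
      have hapos : 0 < a := norm_pos_iff.mpr hr
      -- integrability
      have hgc : Continuous fun t : ℝ => ⟪ψ (t • r), r⟫ :=
        (hψ.continuous.comp (continuous_id.smul continuous_const)).inner continuous_const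
      have hhc : Continuous fun t : ℝ => a - D (t * a) * a :=
        continuous_const.sub ((hDcont.comp (continuous_id.mul continuous_const)).mul
          continuous_const)
      -- pointwise bound on (0,1]
      have hpt : ∀ t ∈ Set.Ioc (0:ℝ) 1, a - D (t * a) * a ≤ ⟪ψ (t • r), r⟫ := by
        intro t ht
        have htpos : 0 < t := ht.1
        have htr : t • r ≠ 0 := smul_ne_zero htpos.ne' hr
        have hnorm : ‖t • r‖ = t * a := by
          rw [norm_smul, Real.norm_eq_abs, abs_of_pos htpos]
        have hb := hbound (t • r) htr
        rw [hnorm] at hb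
        have hsplit : ⟪ψ (t • r), r⟫
            = ⟪(t * a)⁻¹ • (t • r), r⟫ + ⟪ψ (t • r) - ‖t • r‖⁻¹ • (t • r), r⟫ := by
          rw [inner_sub_left, hnorm]; ring
        have h1 : ⟪(t * a)⁻¹ • (t • r), r⟫ = a := by
          rw [smul_smul, real_inner_smul_left, real_inner_self_eq_norm_sq, ← hadef]
          field_simp
        have h2 : -(D (t * a) * a) ≤ ⟪ψ (t • r) - ‖t • r‖⁻¹ • (t • r), r⟫ := by
          have := abs_real_inner_le_norm (ψ (t • r) - ‖t • r‖⁻¹ • (t • r)) r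
          have hmul : ‖ψ (t • r) - ‖t • r‖⁻¹ • (t • r)‖ * ‖r‖ ≤ D (t * a) * a := by
            rw [hnorm, ← hadef]
            exact mul_le_mul hb le_rfl (norm_nonneg _) (hDnonneg _)
          nlinarith [neg_abs_le (⟪ψ (t • r) - ‖t • r‖⁻¹ • (t • r), r⟫ : ℝ)]
        rw [hsplit, h1]
        linarith
      -- integral comparison
      have hint : (∫ t in (0:ℝ)..1, (a - D (t * a) * a)) ≤ ∫ t in (0:ℝ)..1, ⟪ψ (t • r), r⟫ := by
        apply intervalIntegral.integral_mono_ae_restrict (by norm_num : (0:ℝ) ≤ 1)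
          (hhc.intervalIntegrable 0 1) (hgc.intervalIntegrable 0 1)
        have hres : MeasureTheory.volume.restrict (Set.Icc (0:ℝ) 1)
            = MeasureTheory.volume.restrict (Set.Ioc (0:ℝ) 1) :=
          (MeasureTheory.Measure.restrict_congr_set MeasureTheory.Ioc_ae_eq_Icc).symm
        rw [hres]
        filter_upwards [MeasureTheory.ae_restrict_mem measurableSet_Ioc] with t ht
        exact hpt t ht
      -- compute the left integral
      have hDint : Continuous fun t : ℝ => D (t * a) :=
        hDcont.comp (continuous_id.mul continuous_const)
      have hcomp : (∫ t in (0:ℝ)..1, D (t * a)) = a⁻¹ * ∫ s in (0:ℝ)..a, D s := by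
        rw [intervalIntegral.integral_comp_mul_right D hapos.ne']
        simp
      have hleft : (∫ t in (0:ℝ)..1, (a - D (t * a) * a)) = a - ∫ s in (0:ℝ)..a, D s := by
        rw [intervalIntegral.integral_sub (f := fun _ => a) (g := fun t => D (t * a) * a)
          (intervalIntegrable_const)
          ((hDint.mul continuous_const).intervalIntegrable 0 1)]
        have : (∫ t in (0:ℝ)..1, D (t * a) * a) = (∫ t in (0:ℝ)..1, D (t * a)) * a :=
          intervalIntegral.integral_mul_const _ _
        rw [this, hcomp]
        field_simp
        simp
      -- bound ∫₀^a D ≤ M*R + a/4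
      have hDbound : (∫ s in (0:ℝ)..a, D s) ≤ M * R + a / 4 := by
        rcases le_or_gt a R with hcase | hcase
        · have : (∫ s in (0:ℝ)..a, D s) ≤ ∫ _ in (0:ℝ)..a, M := by
            apply intervalIntegral.integral_mono_on hapos.le
              (hDcont.intervalIntegrable 0 a) intervalIntegrable_const
            intro s hs
            exact hM s ⟨hs.1, le_trans hs.2 hcase⟩
          simp only [intervalIntegral.integral_const, smul_eq_mul, sub_zero] at this
          nlinarith
        · have hsplit : (∫ s in (0:ℝ)..a, D s)
              = (∫ s in (0:ℝ)..R, D s) + ∫ s in R..a, D s :=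
            (intervalIntegral.integral_add_adjacent_intervals
              (hDcont.intervalIntegrable 0 R) (hDcont.intervalIntegrable R a)).symm
          have h1 : (∫ s in (0:ℝ)..R, D s) ≤ M * R := by
            have : (∫ s in (0:ℝ)..R, D s) ≤ ∫ _ in (0:ℝ)..R, M := by
              apply intervalIntegral.integral_mono_on hRpos.le
                (hDcont.intervalIntegrable 0 R) intervalIntegrable_const
              intro s hs
              exact hM s hs
            simpa [mul_comm] using this
          have h2 : (∫ s in R..a, D s) ≤ (1/4) * (a - R) := by
            have : (∫ s in R..a, D s) ≤ ∫ _ in R..a, (1/4 : ℝ) := by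
              apply intervalIntegral.integral_mono_on hcase.le
                (hDcont.intervalIntegrable R a) intervalIntegrable_const
              intro s hs
              exact hR s hs.1
            simpa [mul_comm] using this
          nlinarith
      rw [hΦ]
      calc (1/2) * ‖r‖ - D₀ ≤ a - (M * R + a / 4) := by
            rw [← hadef, hD₀def]; nlinarith
        _ ≤ a - ∫ s in (0:ℝ)..a, D s := by linarith
        _ = ∫ t in (0:ℝ)..1, (a - D (t * a) * a) := hleft.symm
        _ ≤ _ := hint
  -- Step 4: conclude
  refine ⟨1/2, D₀, by norm_num, hD₀pos, fun z ξ => ?_⟩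
  rcases eq_or_ne z 0 with rfl | hz
  · simp [hf, hφ0]
  · rw [hf, if_neg hz]
    have hzpos : 0 < |z| := abs_pos.mpr hz
    have hΦξ := hΦlb (|z|⁻¹ • ξ)
    have hnorm : ‖(|z|⁻¹ : ℝ) • ξ‖ = |z|⁻¹ * ‖ξ‖ := by
      rw [norm_smul, Real.norm_eq_abs, abs_of_pos (inv_pos.mpr hzpos)]
    rw [hnorm] at hΦξ
    have hφz := hφnonneg z
    have key : |z| * φ z * ((1/2) * (|z|⁻¹ * ‖ξ‖) - D₀) ≤ |z| * φ z * Φ (|z|⁻¹ • ξ) := by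
      apply mul_le_mul_of_nonneg_left hΦξ (by positivity)
    have hinv : |z| * |z|⁻¹ = 1 := mul_inv_cancel₀ hzpos.ne'
    calc (1/2) * φ z * ‖ξ‖ - D₀ * |z| * φ z
        = |z| * φ z * ((1/2) * (|z|⁻¹ * ‖ξ‖) - D₀) := by
          field_simp
      _ ≤ _ := key
end

section
/- Let ψ : ℝ → ℝ be continuous, odd, non-decreasing, with ψ(λ) ≤ 1 for all λ ≥ 0 and ψ(λ) → 1 as λ → ∞, and suppose ∫₀^∞ (1 − ψ(λ)) dλ < ∞. Define k*(p) = s∫₀^p ψ(λ)dλ and k(v) = sup_{p∈ℝ} (pv − k*(p)) its Legendre transform, for s > 0. Then k(v) = +∞ for |v| > s, k(v) is finite and non-negative for |v| < s, and k(±s) = s∫₀^∞ (1 − ψ(λ)) dλ < ∞. -/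
open MeasureTheory

theorem stmt_15 (s : ℝ) (hs : 0 < s) (ψ : ℝ → ℝ)
    (hcont : Continuous ψ) (hodd : ∀ x, ψ (-x) = -ψ x) (hmono : Monotone ψ)
    (hub : ∀ l : ℝ, 0 ≤ l → ψ l ≤ 1)
    (hlim : Filter.Tendsto ψ Filter.atTop (nhds 1))
    (hint : IntegrableOn (fun l => 1 - ψ l) (Set.Ioi 0))
    (kstar : ℝ → ℝ) (hkstar : ∀ p : ℝ, kstar p = s * ∫ l in (0:ℝ)..p, ψ l) :
    (∀ v : ℝ, s < |v| → ¬ BddAbove (Set.range fun p : ℝ => p * v - kstar p)) ∧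
    (∀ v : ℝ, |v| < s → BddAbove (Set.range fun p : ℝ => p * v - kstar p) ∧
      0 ≤ ⨆ p : ℝ, (p * v - kstar p)) ∧
    (∀ v : ℝ, |v| = s → BddAbove (Set.range fun p : ℝ => p * v - kstar p) ∧
      (⨆ p : ℝ, (p * v - kstar p)) = s * ∫ l in Set.Ioi (0:ℝ), (1 - ψ l)) := by
  have hψ0 : ψ 0 = 0 := by
    have h := hodd 0
    simp at h
    linarith
  have hψnn : ∀ x : ℝ, 0 ≤ x → 0 ≤ ψ x := fun x hx => hψ0 ▸ hmono hx
  -- kstar is even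
  have hkeven : ∀ p : ℝ, kstar (-p) = kstar p := by
    intro p
    rw [hkstar, hkstar]
    congr 1
    have h1 : ∫ x in (0:ℝ)..p, ψ (-x) = ∫ x in (-p)..(-(0:ℝ)), ψ x :=
      intervalIntegral.integral_comp_neg ψ
    rw [neg_zero] at h1
    have h2 : ∫ x in (0:ℝ)..p, ψ (-x) = -∫ x in (0:ℝ)..p, ψ x := by
      simp only [hodd]
      exact intervalIntegral.integral_neg
    have h3 : ∫ x in (-p)..(0:ℝ), ψ x = -∫ x in (0:ℝ)..(-p), ψ x :=
      intervalIntegral.integral_symm 0 (-p)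
    linarith
  have hk0 : kstar 0 = 0 := by simp [hkstar]
  -- kstar t ≤ s * t for t ≥ 0
  have hk_le : ∀ t : ℝ, 0 ≤ t → kstar t ≤ s * t := by
    intro t ht
    rw [hkstar]
    have h1 : ∫ l in (0:ℝ)..t, ψ l ≤ ∫ _ in (0:ℝ)..t, (1:ℝ) := by
      apply intervalIntegral.integral_mono_on ht (hcont.intervalIntegrable _ _)
        intervalIntegrable_const
      intro x hx
      exact hub x hx.1
    simp at h1
    have := mul_le_mul_of_nonneg_left h1 hs.le
    linarith
  -- the identity s*t - kstar t = s * ∫₀ᵗ (1 - ψ)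
  have hid : ∀ t : ℝ, 0 ≤ t → s * t - kstar t = s * ∫ l in (0:ℝ)..t, (1 - ψ l) := by
    intro t ht
    rw [hkstar, intervalIntegral.integral_sub intervalIntegrable_const
      (hcont.intervalIntegrable _ _)]
    simp
    ring
  -- the interval integral is bounded by the Ioi integral
  have hnnIoi : ∀ x ∈ Set.Ioi (0:ℝ), 0 ≤ 1 - ψ x := by
    intro x hx
    have := hub x (le_of_lt hx)
    linarith
  have hintle : ∀ t : ℝ, 0 ≤ t →
      (∫ l in (0:ℝ)..t, (1 - ψ l)) ≤ ∫ l in Set.Ioi (0:ℝ), (1 - ψ l) := by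
    intro t ht
    rw [intervalIntegral.integral_of_le ht]
    apply setIntegral_mono_set hint
    · exact (ae_restrict_iff' measurableSet_Ioi).2 (Filter.Eventually.of_forall hnnIoi)
    · exact HasSubset.Subset.eventuallyLE Set.Ioc_subset_Ioi_self
  set M : ℝ := s * ∫ l in Set.Ioi (0:ℝ), (1 - ψ l) with hM
  have hMnn : 0 ≤ M :=
    mul_nonneg hs.le (setIntegral_nonneg measurableSet_Ioi hnnIoi)
  have hkabs : ∀ p : ℝ, kstar p = kstar |p| := by
    intro p
    rcases le_or_gt 0 p with h | h
    · rw [abs_of_nonneg h]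
    · rw [abs_of_neg h, hkeven]
  -- key upper bound
  have hbound : ∀ v : ℝ, |v| ≤ s → ∀ p : ℝ, p * v - kstar p ≤ M := by
    intro v hv p
    have h1 : p * v ≤ |p| * s := by
      calc p * v ≤ |p * v| := le_abs_self _
      _ = |p| * |v| := abs_mul _ _
      _ ≤ |p| * s := mul_le_mul_of_nonneg_left hv (abs_nonneg p)
    have h2 : s * |p| - kstar |p| ≤ M := by
      rw [hid |p| (abs_nonneg p)]
      exact mul_le_mul_of_nonneg_left (hintle |p| (abs_nonneg p)) hs.le
    rw [hkabs p]
    linarith [h1, h2]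
  have hbddAbove : ∀ v : ℝ, |v| ≤ s →
      BddAbove (Set.range fun p : ℝ => p * v - kstar p) := by
    intro v hv
    exact ⟨M, fun x ⟨p, hp⟩ => hp ▸ hbound v hv p⟩
  -- convergence along atTop for v = s
  have htend : Filter.Tendsto (fun t : ℝ => s * ∫ l in (0:ℝ)..t, (1 - ψ l))
      Filter.atTop (nhds M) := by
    apply Filter.Tendsto.const_mul
    exact intervalIntegral_tendsto_integral_Ioi 0 hint Filter.tendsto_id
  -- sup equals M for v = s
  have hsupS : (⨆ p : ℝ, (p * s - kstar p)) = M := by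
    apply le_antisymm
    · exact ciSup_le fun p => hbound s (abs_of_pos hs).le p
    · apply le_of_tendsto htend
      filter_upwards [Filter.eventually_ge_atTop (0:ℝ)] with t ht
      have h1 : s * ∫ l in (0:ℝ)..t, (1 - ψ l) = t * s - kstar t := by
        rw [← hid t ht]; ring
      rw [h1]
      exact le_ciSup (hbddAbove s (abs_of_pos hs).le) t
  -- range equality for v = -s
  have hrangeNeg : (Set.range fun p : ℝ => p * (-s) - kstar p) =
      Set.range fun p : ℝ => p * s - kstar p := by
    have hfun : (fun p : ℝ => p * (-s) - kstar p) =
        (fun p : ℝ => p * s - kstar p) ∘ Neg.neg := by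
      funext p
      simp [Function.comp, hkeven p]
    rw [hfun]
    exact neg_surjective.range_comp _
  refine ⟨?_, ?_, ?_⟩
  · -- |v| > s : unbounded
    intro v hv hbdd
    obtain ⟨b, hb⟩ := hbdd
    rcases lt_abs.mp hv with h | h
    · -- s < v
      set t : ℝ := (|b| + 1) / (v - s) with htdef
      have htpos : 0 ≤ t := div_nonneg (by positivity) (by linarith)
      have h1 : t * v - kstar t ≤ b := hb ⟨t, rfl⟩
      have h2 : t * (v - s) ≤ t * v - kstar t := by
        have := hk_le t htpos
        nlinarith
      have h3 : t * (v - s) = |b| + 1 :=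
        div_mul_cancel₀ _ (sub_pos.mpr h).ne' 
      nlinarith [abs_nonneg b, le_abs_self b]
    · -- s < -v
      set t : ℝ := (|b| + 1) / (-v - s) with htdef
      have htpos : 0 ≤ t := div_nonneg (by positivity) (by linarith)
      have h1 : (-t) * v - kstar (-t) ≤ b := hb ⟨-t, rfl⟩
      rw [hkeven] at h1
      have h2 : t * (-v - s) ≤ (-t) * v - kstar t := by
        have := hk_le t htpos
        nlinarith
      have h3 : t * (-v - s) = |b| + 1 :=
        div_mul_cancel₀ _ (sub_pos.mpr h).ne' 
      nlinarith [abs_nonneg b, le_abs_self b]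
  · -- |v| < s
    intro v hv
    have hbd := hbddAbove v hv.le
    refine ⟨hbd, ?_⟩
    have h0 : (0:ℝ) * v - kstar 0 = 0 := by simp [hk0]
    calc (0:ℝ) = 0 * v - kstar 0 := h0.symm
    _ ≤ ⨆ p : ℝ, (p * v - kstar p) := le_ciSup hbd 0
  · -- |v| = s
    intro v hv
    have hbd := hbddAbove v hv.le
    refine ⟨hbd, ?_⟩
    rcases (abs_eq hs.le).mp hv with rfl | rfl
    · exact hsupS
    · have : (⨆ p : ℝ, (p * (-s) - kstar p)) = ⨆ p : ℝ, (p * s - kstar p) := by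
        rw [iSup, iSup, hrangeNeg]
      rw [this, hsupS]
end
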